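/- arXiv:1403.7121 — 3 statements merged into one kernel-verified Lean document; each statement's English description precedes it below -/
import Mathlib

section
/- Let A be an associative unital F-algebra containing a U_q(su(2)) triple K, K⁻¹, J₊, J₋. Define the conjugate components t̄₁ = −J₋K, t̄₀ = c⁻¹(s⁻¹ J₊J₋ − s J₋J₊), t̄₋₁ = J₊K (equivalently t̄_A = (−1)^{1−A} s^A t_{−A}). Then t̄ transforms as a vector under the coadjoint action of U_{q⁻¹}(su(2)), i.e. with the antipode S̄(K) = K⁻¹, S̄(J±) = −s^{∓1}J±: (i) K⁻¹ t̄_A K = s^A t̄_A for A = −1, 0, 1; (ii) K⁻¹ t̄₋₁ J₊ − s⁻¹ J₊ t̄₋₁ K⁻¹ = 0, K⁻¹ t̄₀ J₊ − s⁻¹ J₊ t̄₀ K⁻¹ = c·t̄₋₁, and K⁻¹ t̄₁ J₊ − s⁻¹ J₊ t̄₁ K⁻¹ = c·t̄₀; (iii) K⁻¹ t̄₁ J₋ − s J₋ t̄₁ K⁻¹ = 0, K⁻¹ t̄₀ J₋ − s J₋ t̄₀ K⁻¹ = c·t̄₁, and K⁻¹ t̄₋₁ J₋ − s J₋ t̄₋₁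 K⁻¹ = c·t̄₀. -/
/-!
Conjugation by `K⁻¹` scales a vector of `K`-weight `a` by `a⁻¹`, so each `t̄_A` is a weight
vector for `K⁻¹` and (i) is immediate. For weight vectors `X`, `Y` of `K⁻¹` with weights `a`, `b`,
`K⁻¹ X Y - b Y X K⁻¹ = b (a X Y - Y X) K⁻¹`, which turns each q⁻¹-coadjoint action in (ii) and (iii)
into a twisted commutator. For `t̄_{±1}` these are computed from `K J± = s^{±1} J± K` alone; for
`t̄₀` the commutation relation gives `[c t̄₀, J₊] = [2] s J₊ K²` and `[c t̄₀, J₋] = -[2] s⁻¹ J₋ K²`,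
and `c² = [2]` finishes the computation.
-/

section

variable {R A : Type*} [CommRing R] [Ring A] [Algebra R A]

def HasWeight (K X : A) (a : R) : Prop := K * X = a • (X * K)

namespace HasWeight

variable {K Ki X Y : A} {a b : R}

theorem of_commute (h : Commute K X) : HasWeight K X (1 : R) := by
  rw [HasWeight, one_smul]; exact h.eq

theorem of_conj (hKiK : Ki * K = 1) (h : K * X * Ki = a • X) : HasWeight K X a := by
  calc K * X = K * X * Ki * K := by rw [mul_assoc (K * X), hKiK, mul_one]
    _ = a • (X * K) := by rw [h, smul_mul_assoc]

theorem mul (hX : HasWeight K X a) (hY : HasWeight K Y b) : HasWeight K (X * Y) (a * b) := by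
  rw [HasWeight, ← mul_assoc, hX, smul_mul_assoc, mul_assoc, hY, mul_smul_comm, smul_smul,
    mul_assoc]

theorem neg (h : HasWeight K X a) : HasWeight K (-X) a := by
  rw [HasWeight, mul_neg, h, neg_mul, smul_neg]

theorem smul (h : HasWeight K X a) (b : R) : HasWeight K (b • X) a := by
  rw [HasWeight, mul_smul_comm, h, smul_mul_assoc, smul_comm]

theorem sub (hX : HasWeight K X a) (hY : HasWeight K Y a) : HasWeight K (X - Y) a := by
  rw [HasWeight, mul_sub, hX, hY, sub_mul, smul_sub]

theorem pow (h : HasWeight K X a) (n : ℕ) : HasWeight (K ^ n) X (a ^ n) := by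
  induction n with
  | zero => simp [HasWeight]
  | succ n ih =>
    rw [HasWeight, pow_succ, mul_assoc, h, mul_smul_comm, ← mul_assoc, ih, smul_mul_assoc,
      smul_smul, mul_assoc, ← pow_succ, ← pow_succ']

theorem conj_eq (h : HasWeight Ki X a) (hKiK : Ki * K = 1) : Ki * X * K = a • X := by
  rw [h, smul_mul_assoc, mul_assoc, hKiK, mul_one]

theorem mul_mul_sub_smul_mul_mul (hX : HasWeight Ki X a) (hY : HasWeight Ki Y b) :
    Ki * X * Y - b • (Y * X * Ki) = b • ((a • (X * Y) - Y * X) * Ki) := by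
  rw [hX, smul_mul_assoc, mul_assoc, hY, mul_smul_comm, sub_mul, smul_sub, smul_smul,
    smul_mul_assoc, smul_smul, mul_comm a b, ← mul_assoc]

end HasWeight

end

section

variable {F A : Type*} [Field F] [Ring A] [Algebra F A]

theorem HasWeight.inv {K Ki X : A} {a : F} (hKKi : K * Ki = 1) (hKiK : Ki * K = 1) (ha : a ≠ 0)
    (h : HasWeight K X a) : HasWeight Ki X a⁻¹ := by
  have h' : X * Ki = a • (Ki * X) := by
    calc X * Ki = Ki * (K * X) * Ki := by rw [← mul_assoc, hKiK, one_mul]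
      _ = a • (Ki * X) := by rw [h, mul_smul_comm, smul_mul_assoc, mul_assoc, mul_assoc, hKKi,
        mul_one]
  rw [HasWeight, h', smul_smul, inv_mul_cancel₀ ha, one_smul]

theorem ne_zero_of_sub_inv_ne_zero {s : F} (h : s - s⁻¹ ≠ 0) : s ≠ 0 := by
  rintro rfl; simp at h

theorem sq_sub_one_ne_zero_of_sub_inv_ne_zero {s : F} (h : s - s⁻¹ ≠ 0) : s ^ 2 - 1 ≠ 0 :=
  fun h' => h (by field_simp [ne_zero_of_sub_inv_ne_zero h]; linear_combination h')

structure IsUqSu2Triple (s : F) (K Ki Jp Jm : A) : Prop where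
  K_mul_Ki : K * Ki = 1
  Ki_mul_K : Ki * K = 1
  conj_Jp : K * Jp * Ki = s • Jp
  conj_Jm : K * Jm * Ki = s⁻¹ • Jm
  Jp_mul_Jm_sub : Jp * Jm - Jm * Jp = (s - s⁻¹)⁻¹ • (K ^ 2 - Ki ^ 2)

def tbarOne (K Jm : A) : A := -(Jm * K)

def tbarZero (s c : F) (Jp Jm : A) : A := c⁻¹ • (s⁻¹ • (Jp * Jm) - s • (Jm * Jp))

def tbarMinusOne (K Jp : A) : A := Jp * K

namespace IsUqSu2Triple

variable {s : F} {K Ki Jp Jm : A} (T : IsUqSu2Triple s K Ki Jp Jm)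
include T

theorem hasWeight_Jp : HasWeight K Jp s := .of_conj T.Ki_mul_K T.conj_Jp

theorem hasWeight_Jm : HasWeight K Jm s⁻¹ := .of_conj T.Ki_mul_K T.conj_Jm

theorem hasWeight_inv_Jp (hs : s ≠ 0) : HasWeight Ki Jp s⁻¹ :=
  T.hasWeight_Jp.inv T.K_mul_Ki T.Ki_mul_K hs

theorem hasWeight_inv_Jm (hs : s ≠ 0) : HasWeight Ki Jm s := by
  simpa using T.hasWeight_Jm.inv T.K_mul_Ki T.Ki_mul_K (inv_ne_zero hs)

theorem hasWeight_inv_K : HasWeight Ki K (1 : F) :=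
  .of_commute (by rw [Commute, SemiconjBy, T.Ki_mul_K, T.K_mul_Ki])

theorem hasWeight_tbarOne (hs : s ≠ 0) : HasWeight Ki (tbarOne K Jm) s := by
  simpa [tbarOne] using ((T.hasWeight_inv_Jm hs).mul T.hasWeight_inv_K).neg

theorem hasWeight_tbarMinusOne (hs : s ≠ 0) : HasWeight Ki (tbarMinusOne K Jp) s⁻¹ := by
  simpa [tbarMinusOne] using (T.hasWeight_inv_Jp hs).mul T.hasWeight_inv_K

theorem hasWeight_tbarZero (hs : s ≠ 0) (c : F) : HasWeight Ki (tbarZero s c Jp Jm) (1 : F) := by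
  have hJpJm := (T.hasWeight_inv_Jp hs).mul (T.hasWeight_inv_Jm hs)
  have hJmJp := (T.hasWeight_inv_Jm hs).mul (T.hasWeight_inv_Jp hs)
  rw [inv_mul_cancel₀ hs] at hJpJm
  rw [mul_inv_cancel₀ hs] at hJmJp
  exact ((hJpJm.smul _).sub (hJmJp.smul _)).smul _

theorem commutator_Jp (hs' : s - s⁻¹ ≠ 0) :
    (s⁻¹ • (Jp * Jm) - s • (Jm * Jp)) * Jp - Jp * (s⁻¹ • (Jp * Jm) - s • (Jm * Jp)) =
      ((s + s⁻¹) * s) • (Jp * K ^ 2) := by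
  have hs := ne_zero_of_sub_inv_ne_zero hs'
  have hK : K ^ 2 * Jp = s ^ 2 • (Jp * K ^ 2) := T.hasWeight_Jp.pow 2
  have hKi : Ki ^ 2 * Jp = s⁻¹ ^ 2 • (Jp * Ki ^ 2) := (T.hasWeight_inv_Jp hs).pow 2
  calc _ = s • ((Jp * Jm - Jm * Jp) * Jp) - s⁻¹ • (Jp * (Jp * Jm - Jm * Jp)) := by
        simp only [sub_mul, mul_sub, smul_sub, smul_mul_assoc, mul_smul_comm, mul_assoc]; abel
    _ = ((s + s⁻¹) * s) • (Jp * K ^ 2) := by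
        rw [T.Jp_mul_Jm_sub, smul_mul_assoc, mul_smul_comm, sub_mul, mul_sub, hK, hKi]
        have hs2 := sq_sub_one_ne_zero_of_sub_inv_ne_zero hs'
        match_scalars <;> field_simp <;> ring

theorem commutator_Jm (hs' : s - s⁻¹ ≠ 0) :
    (s⁻¹ • (Jp * Jm) - s • (Jm * Jp)) * Jm - Jm * (s⁻¹ • (Jp * Jm) - s • (Jm * Jp)) =
      -((s + s⁻¹) * s⁻¹) • (Jm * K ^ 2) := by
  have hs := ne_zero_of_sub_inv_ne_zero hs'
  have hK : K ^ 2 * Jm = s⁻¹ ^ 2 • (Jm * K ^ 2) := T.hasWeight_Jm.pow 2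
  have hKi : Ki ^ 2 * Jm = s ^ 2 • (Jm * Ki ^ 2) := (T.hasWeight_inv_Jm hs).pow 2
  calc _ = s⁻¹ • ((Jp * Jm - Jm * Jp) * Jm) - s • (Jm * (Jp * Jm - Jm * Jp)) := by
        simp only [sub_mul, mul_sub, smul_sub, smul_mul_assoc, mul_smul_comm, mul_assoc]; abel
    _ = -((s + s⁻¹) * s⁻¹) • (Jm * K ^ 2) := by
        rw [T.Jp_mul_Jm_sub, smul_mul_assoc, mul_smul_comm, sub_mul, mul_sub, hK, hKi]
        have hs2 := sq_sub_one_ne_zero_of_sub_inv_ne_zero hs'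
        match_scalars <;> field_simp <;> ring

theorem inv_conj_tbar (hs : s ≠ 0) (c : F) :
    Ki * tbarOne K Jm * K = s • tbarOne K Jm ∧
      Ki * tbarZero s c Jp Jm * K = tbarZero s c Jp Jm ∧
      Ki * tbarMinusOne K Jp * K = s⁻¹ • tbarMinusOne K Jp :=
  ⟨(T.hasWeight_tbarOne hs).conj_eq T.Ki_mul_K,
    (by simpa using (T.hasWeight_tbarZero hs c).conj_eq T.Ki_mul_K),
    (T.hasWeight_tbarMinusOne hs).conj_eq T.Ki_mul_K⟩

theorem coadjoint_Jp (hs' : s - s⁻¹ ≠ 0) {c : F} (hc : c ≠ 0) (hc2 : c ^ 2 = s + s⁻¹) :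
    Ki * tbarMinusOne K Jp * Jp - s⁻¹ • (Jp * tbarMinusOne K Jp * Ki) = 0 ∧
      Ki * tbarZero s c Jp Jm * Jp - s⁻¹ • (Jp * tbarZero s c Jp Jm * Ki) = c • tbarMinusOne K Jp ∧
      Ki * tbarOne K Jm * Jp - s⁻¹ • (Jp * tbarOne K Jm * Ki) = c • tbarZero s c Jp Jm := by
  have hs := ne_zero_of_sub_inv_ne_zero hs'
  have hJp := T.hasWeight_inv_Jp hs
  have hKJp : K * Jp = s • (Jp * K) := T.hasWeight_Jp
  refine ⟨?_, ?_, ?_⟩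
  · rw [(T.hasWeight_tbarMinusOne hs).mul_mul_sub_smul_mul_mul hJp, tbarMinusOne, mul_assoc Jp K,
      hKJp, mul_smul_comm, smul_smul, inv_mul_cancel₀ hs, one_smul, ← mul_assoc, sub_self,
      zero_mul, smul_zero]
  · rw [(T.hasWeight_tbarZero hs c).mul_mul_sub_smul_mul_mul hJp, one_smul, tbarZero,
      smul_mul_assoc, mul_smul_comm, ← smul_sub, T.commutator_Jp hs', smul_smul, smul_mul_assoc,
      smul_smul, tbarMinusOne, pow_two, mul_assoc, mul_assoc, T.K_mul_Ki, mul_one]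
    congr 1
    rw [← hc2]
    field_simp
  · rw [(T.hasWeight_tbarOne hs).mul_mul_sub_smul_mul_mul hJp, tbarOne, tbarZero, smul_smul,
      mul_inv_cancel₀ hc, one_smul]
    simp only [neg_mul, mul_neg, sub_mul, mul_smul_comm, smul_mul_assoc, mul_assoc, hKJp,
      T.K_mul_Ki, mul_one]
    match_scalars <;> field_simp

theorem coadjoint_Jm (hs' : s - s⁻¹ ≠ 0) {c : F} (hc : c ≠ 0) (hc2 : c ^ 2 = s + s⁻¹) :
    Ki * tbarOne K Jm * Jm - s • (Jm * tbarOne K Jm * Ki) = 0 ∧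
      Ki * tbarZero s c Jp Jm * Jm - s • (Jm * tbarZero s c Jp Jm * Ki) = c • tbarOne K Jm ∧
      Ki * tbarMinusOne K Jp * Jm - s • (Jm * tbarMinusOne K Jp * Ki) = c • tbarZero s c Jp Jm := by
  have hs := ne_zero_of_sub_inv_ne_zero hs'
  have hJm := T.hasWeight_inv_Jm hs
  have hKJm : K * Jm = s⁻¹ • (Jm * K) := T.hasWeight_Jm
  refine ⟨?_, ?_, ?_⟩
  · rw [(T.hasWeight_tbarOne hs).mul_mul_sub_smul_mul_mul hJm, tbarOne, neg_mul, mul_neg,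
      mul_assoc Jm K, hKJm, mul_smul_comm, smul_neg, smul_smul, mul_inv_cancel₀ hs, one_smul,
      ← mul_assoc, sub_neg_eq_add, neg_add_cancel, zero_mul, smul_zero]
  · rw [(T.hasWeight_tbarZero hs c).mul_mul_sub_smul_mul_mul hJm, one_smul, tbarZero,
      smul_mul_assoc, mul_smul_comm, ← smul_sub, T.commutator_Jm hs', smul_smul, smul_mul_assoc,
      smul_smul, tbarOne, pow_two, mul_assoc, mul_assoc, T.K_mul_Ki, mul_one, smul_neg,
      ← neg_smul]
    congr 1
    rw [← hc2]
    field_simp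
  · rw [(T.hasWeight_tbarMinusOne hs).mul_mul_sub_smul_mul_mul hJm, tbarMinusOne, tbarZero,
      smul_smul, mul_inv_cancel₀ hc, one_smul]
    simp only [sub_mul, mul_smul_comm, smul_mul_assoc, mul_assoc, hKJm, T.K_mul_Ki, mul_one]
    match_scalars <;> field_simp

end IsUqSu2Triple

end

variable {F : Type} [Field F] {A : Type} [Ring A] [Algebra F A]

theorem tbar_is_coadjoint_vector_qinv_general (s c : F) (hs' : s - s⁻¹ ≠ 0)
    (hc : c ≠ 0) (hc2 : c ^ 2 = s + s⁻¹)
    (K Ki Jp Jm : A)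
    (hKKi : K * Ki = 1) (hKiK : Ki * K = 1)
    (hp : K * Jp * Ki = s • Jp) (hm : K * Jm * Ki = s⁻¹ • Jm)
    (hcomm : Jp * Jm - Jm * Jp = (s - s⁻¹)⁻¹ • (K ^ 2 - Ki ^ 2))
    (tb1 tb0 tbm1 : A)
    (htb1 : tb1 = -(Jm * K))
    (htb0 : tb0 = c⁻¹ • (s⁻¹ • (Jp * Jm) - s • (Jm * Jp)))
    (htbm1 : tbm1 = Jp * K) :
    -- (i) action of K
    (Ki * tb1 * K = s • tb1 ∧ Ki * tb0 * K = tb0 ∧ Ki * tbm1 * K = s⁻¹ • tbm1) ∧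
    -- (ii) coadjoint (q⁻¹) action of J₊
    (Ki * tbm1 * Jp - s⁻¹ • (Jp * tbm1 * Ki) = 0 ∧
     Ki * tb0 * Jp - s⁻¹ • (Jp * tb0 * Ki) = c • tbm1 ∧
     Ki * tb1 * Jp - s⁻¹ • (Jp * tb1 * Ki) = c • tb0) ∧
    -- (iii) coadjoint (q⁻¹) action of J₋
    (Ki * tb1 * Jm - s • (Jm * tb1 * Ki) = 0 ∧
     Ki * tb0 * Jm - s • (Jm * tb0 * Ki) = c • tb1 ∧
     Ki * tbm1 * Jm - s • (Jm * tbm1 * Ki) = c • tb0) := by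
  have T : IsUqSu2Triple s K Ki Jp Jm := ⟨hKKi, hKiK, hp, hm, hcomm⟩
  subst htb1 htb0 htbm1
  exact ⟨T.inv_conj_tbar (ne_zero_of_sub_inv_ne_zero hs') c, T.coadjoint_Jp hs' hc hc2,
    T.coadjoint_Jm hs' hc hc2⟩

theorem tbar_is_coadjoint_vector_qinv (s c : F) (hs : s ≠ 0) (hs' : s - s⁻¹ ≠ 0)
    (hc : c ≠ 0) (hc2 : c ^ 2 = s + s⁻¹)
    (K Ki Jp Jm : A)
    (hKKi : K * Ki = 1) (hKiK : Ki * K = 1)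
    (hp : K * Jp * Ki = s • Jp) (hm : K * Jm * Ki = s⁻¹ • Jm)
    (hcomm : Jp * Jm - Jm * Jp = (s - s⁻¹)⁻¹ • (K ^ 2 - Ki ^ 2))
    (tb1 tb0 tbm1 : A)
    (htb1 : tb1 = -(Jm * K))
    (htb0 : tb0 = c⁻¹ • (s⁻¹ • (Jp * Jm) - s • (Jm * Jp)))
    (htbm1 : tbm1 = Jp * K) :
    -- (i) action of K
    (Ki * tb1 * K = s • tb1 ∧ Ki * tb0 * K = tb0 ∧ Ki * tbm1 * K = s⁻¹ • tbm1) ∧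
    -- (ii) coadjoint (q⁻¹) action of J₊
    (Ki * tbm1 * Jp - s⁻¹ • (Jp * tbm1 * Ki) = 0 ∧
     Ki * tb0 * Jp - s⁻¹ • (Jp * tb0 * Ki) = c • tbm1 ∧
     Ki * tb1 * Jp - s⁻¹ • (Jp * tb1 * Ki) = c • tb0) ∧
    -- (iii) coadjoint (q⁻¹) action of J₋
    (Ki * tb1 * Jm - s • (Jm * tb1 * Ki) = 0 ∧
     Ki * tb0 * Jm - s • (Jm * tb0 * Ki) = c • tb1 ∧
     Ki * tbm1 * Jm - s • (Jm * tbm1 * Ki) = c • tb0) :=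
  tbar_is_coadjoint_vector_qinv_general s c hs' hc hc2 K Ki Jp Jm hKKi hKiK hp hm hcomm tb1 tb0 tbm1
    htb1 htb0 htbm1
end

section
/- Let A be an associative unital F-algebra containing a U_q(su(2)) triple K, K⁻¹, J₊, J₋. Define in A ⊗ A the components ⁽¹⁾t_A = t_A ⊗ 1 and ⁽²⁾t₁ = K² ⊗ KJ₊, ⁽²⁾t₀ = −c⁻¹[1 ⊗ (s⁻¹J₊J₋ − sJ₋J₊) − (s − s⁻¹)(s + s⁻¹) KJ₋ ⊗ KJ₊], ⁽²⁾t₋₁ = −K⁻² ⊗ KJ₋ − s⁻¹(s − s⁻¹) K⁻¹J₋ ⊗ (s⁻¹J₊J₋ − sJ₋J₊) + s⁻¹(s − s⁻¹)² J₋² ⊗ KJ₊. Then the quantum scalar product factorizes: Σ_{m = −1,0,1} (−1)^{1−m} s^m · ⁽¹⁾t_m · ⁽²⁾t_{−m} = s² · (t^op₁ ⊗ t₋₁ + t^op₀ ⊗ t₀ + t^op₋₁ ⊗ t₁), i.e. ⁽¹⁾t · ⁽²⁾t = q Σ_A t^op_{−A} ⊗ t_A as an identity of elements of A ⊗ A.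 -/
/-!
Expand both sides and collect them by the second tensor factor, which is always one of
`K J₋`, `X = s⁻¹ J₊J₋ − s J₋J₊` or `K J₊`; the relation `K J₊ K⁻¹ = s J₊` turns the first
factors `K J₊ K⁻²` and `K J₊ K⁻¹ J₋` into `s J₊K⁻¹` and `s J₊J₋`. The `X` coefficients then
agree because `c⁻² = [2]⁻¹` and `s (s − s⁻¹) [2] + s⁻¹ = s³`.
For the `K J₊` coefficient, move every `K` to the right (`K J± = s^{±1} J± K`): the terms
then combine into `(s − s⁻¹)(J₊J₋ − J₋J₊) J₋K`, and the commutation relation reduces this to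
`−s² J₋K⁻¹`.
-/

open TensorProduct

variable {F : Type} [Field F] {A : Type} [Ring A] [Algebra F A]

section Conjugation

variable {K Ki x : A} {a : F}

theorem mul_eq_smul_mul_of_mul_mul_eq_smul (hKiK : Ki * K = 1) (h : K * x * Ki = a • x) :
    K * x = a • (x * K) := by
  rw [← smul_mul_assoc, ← h, mul_assoc _ Ki, hKiK, mul_one]

theorem mul_eq_smul_mul_of_mul_mul_eq_inv_smul (hKiK : Ki * K = 1) (ha : a ≠ 0)
    (h : K * x * Ki = a⁻¹ • x) : Ki * x = a • (x * Ki) := by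
  rw [← inv_smul_eq_iff₀ ha, ← mul_smul_comm, ← h, ← mul_assoc, ← mul_assoc, hKiK, one_mul]

theorem mul_mul_eq_smul_mul_mul (h : K * x = a • (x * K)) (w : A) :
    K * (x * w) = a • (x * (K * w)) := by
  rw [← mul_assoc, h, smul_mul_assoc, mul_assoc]

end Conjugation

namespace QuantumScalarProduct

theorem coeff_X_eq {V : Type*} [AddCommGroup V] [Module F V] {s : F} (hs : s ≠ 0)
    (h2 : s + s⁻¹ ≠ 0) (P M : V) :
    (s * (s - s⁻¹)) • P + (s + s⁻¹)⁻¹ • (s⁻¹ • P - s • M)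
      = (s ^ 2 * (s + s⁻¹)⁻¹) • (s • P - s⁻¹ • M) := by
  have h2' : s ^ 2 + 1 ≠ 0 := by
    rw [show s ^ 2 + 1 = (s + s⁻¹) * s by field_simp]
    exact mul_ne_zero h2 hs
  match_scalars <;> field_simp
  ring

theorem coeff_KJp_eq {s : F} (hs : s ≠ 0) (hs' : s - s⁻¹ ≠ 0) {K Ki Jp Jm : A}
    (hKiK : Ki * K = 1) (hp : K * Jp * Ki = s • Jp) (hm : K * Jm * Ki = s⁻¹ • Jm)
    (hcomm : Jp * Jm - Jm * Jp = (s - s⁻¹)⁻¹ • (K ^ 2 - Ki ^ 2)) :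
    (s - s⁻¹) ^ 2 • (K * Jp * Jm ^ 2)
      + (s - s⁻¹) • ((s⁻¹ • (Jp * Jm) - s • (Jm * Jp)) * (K * Jm))
      - s⁻¹ • (K * Jm * K ^ 2) = -(s ^ 2 • (Jm * Ki)) := by
  have hKJp := mul_eq_smul_mul_of_mul_mul_eq_smul hKiK hp
  have hKJm := mul_eq_smul_mul_of_mul_mul_eq_smul hKiK hm
  have hKiJm := mul_eq_smul_mul_of_mul_mul_eq_inv_smul hKiK hs hm
  have hε : (s - s⁻¹) • (Jp * Jm - Jm * Jp) = K ^ 2 - Ki ^ 2 := by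
    rw [hcomm, smul_smul, mul_inv_cancel₀ hs', one_smul]
  calc _ = (s - s⁻¹) • (Jp * Jm - Jm * Jp) * (Jm * K) - s⁻¹ • (K * Jm * K ^ 2) := by
        congr 1
        simp only [pow_two, mul_assoc, sub_mul, mul_sub, smul_mul_assoc, mul_smul_comm, smul_sub,
          hKJp, hKJm, mul_mul_eq_smul_mul_mul hKJm]
        match_scalars <;> field_simp
        ring
    _ = (K ^ 2 - Ki ^ 2) * (Jm * K) - s⁻¹ • (K * Jm * K ^ 2) := by rw [hε]
    _ = -(s ^ 2 • (Jm * Ki)) := by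
        simp only [pow_two, mul_assoc, sub_mul, smul_mul_assoc, mul_smul_comm, hKJm, hKiJm, hKiK,
          mul_mul_eq_smul_mul_mul hKJm, mul_mul_eq_smul_mul_mul hKiJm, mul_one]
        module

end QuantumScalarProduct

theorem quantum_scalar_product_factorizes_general (s c : F)
    (hs : s ≠ 0) (hs' : s - s⁻¹ ≠ 0) (hc : c ≠ 0) (hc2 : c ^ 2 = s + s⁻¹)
    (K Ki Jp Jm : A)
    (hKiK : Ki * K = 1)
    (hp : K * Jp * Ki = s • Jp) (hm : K * Jm * Ki = s⁻¹ • Jm)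
    (hcomm : Jp * Jm - Jm * Jp = (s - s⁻¹)⁻¹ • (K ^ 2 - Ki ^ 2))
    -- the vector operator t
    (t1 t0 tm1 : A)
    (ht1 : t1 = K * Jp)
    (ht0 : t0 = -(c⁻¹ • (s⁻¹ • (Jp * Jm) - s • (Jm * Jp))))
    (htm1 : tm1 = -(K * Jm))
    -- the operator t^op
    (top1 top0 topm1 : A)
    (htop1 : top1 = Jp * Ki)
    (htop0 : top0 = c⁻¹ • (s • (Jp * Jm) - s⁻¹ • (Jm * Jp)))
    (htopm1 : topm1 = -(Jm * Ki))
    -- the components of ⁽²⁾t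
    (t21 t20 t2m1 : A ⊗[F] A)
    (ht21 : t21 = (K ^ 2) ⊗ₜ[F] (K * Jp))
    (ht20 : t20 = -(c⁻¹ • ((1 : A) ⊗ₜ[F] (s⁻¹ • (Jp * Jm) - s • (Jm * Jp))
        - ((s - s⁻¹) * (s + s⁻¹)) • ((K * Jm) ⊗ₜ[F] (K * Jp)))))
    (ht2m1 : t2m1 = -((Ki ^ 2) ⊗ₜ[F] (K * Jm))
        - (s⁻¹ * (s - s⁻¹)) • ((Ki * Jm) ⊗ₜ[F] (s⁻¹ • (Jp * Jm) - s • (Jm * Jp)))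
        + (s⁻¹ * (s - s⁻¹) ^ 2) • ((Jm ^ 2) ⊗ₜ[F] (K * Jp))) :
    -- Σ_{m = −1,0,1} (−1)^{1−m} s^m ⁽¹⁾t_m ⁽²⁾t_{−m} = s² Σ_A t^op_{−A} ⊗ t_A
    s • ((t1 ⊗ₜ[F] (1 : A)) * t2m1)
      - (t0 ⊗ₜ[F] (1 : A)) * t20
      + s⁻¹ • ((tm1 ⊗ₜ[F] (1 : A)) * t21)
    = (s ^ 2) • (top1 ⊗ₜ[F] tm1 + top0 ⊗ₜ[F] t0 + topm1 ⊗ₜ[F] t1) := by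
  subst ht1 ht0 htm1 htop1 htop0 htopm1 ht21 ht20 ht2m1
  have h2 : s + s⁻¹ ≠ 0 := hc2 ▸ pow_ne_zero 2 hc
  have hcc : c⁻¹ * c⁻¹ = (s + s⁻¹)⁻¹ := by rw [← hc2, ← mul_inv, ← sq]
  have hKJpKi2 : K * Jp * Ki ^ 2 = s • (Jp * Ki) := by
    rw [pow_two, ← mul_assoc, hp, smul_mul_assoc]
  have hKJpKiJm : K * Jp * (Ki * Jm) = s • (Jp * Jm) := by
    rw [← mul_assoc, hp, smul_mul_assoc]
  set X := s⁻¹ • (Jp * Jm) - s • (Jm * Jp) with hX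
  calc _ = -(s ^ 2 • (Jp * Ki) ⊗ₜ[F] (K * Jm))
        - ((s * (s - s⁻¹)) • (Jp * Jm) + (c⁻¹ * c⁻¹) • X) ⊗ₜ[F] X
        + ((s - s⁻¹) ^ 2 • (K * Jp * Jm ^ 2)
            + (c⁻¹ * c⁻¹ * ((s - s⁻¹) * (s + s⁻¹))) • (X * (K * Jm))
            - s⁻¹ • (K * Jm * K ^ 2)) ⊗ₜ[F] (K * Jp) := by
        simp only [Algebra.TensorProduct.tmul_mul_tmul, sub_tmul, add_tmul, neg_tmul, mul_sub,
          sub_mul, mul_add, mul_neg, neg_mul, mul_one, one_mul, ← smul_tmul', smul_mul_assoc,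
          mul_smul_comm, hKJpKi2, hKJpKiJm]
        match_scalars <;> field_simp
    _ = -(s ^ 2 • (Jp * Ki) ⊗ₜ[F] (K * Jm))
        - ((s ^ 2 * (c⁻¹ * c⁻¹)) • (s • (Jp * Jm) - s⁻¹ • (Jm * Jp))) ⊗ₜ[F] X
        + (-(s ^ 2 • (Jm * Ki))) ⊗ₜ[F] (K * Jp) := by
        rw [hcc, mul_comm (s - s⁻¹), inv_mul_cancel_left₀ h2, hX,
          QuantumScalarProduct.coeff_X_eq hs h2,
          QuantumScalarProduct.coeff_KJp_eq hs hs' hKiK hp hm hcomm]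
    _ = _ := by
        simp only [sub_tmul, tmul_neg, neg_tmul, ← smul_tmul', tmul_smul]
        module

theorem quantum_scalar_product_factorizes (s c : F)
    (hs : s ≠ 0) (hs' : s - s⁻¹ ≠ 0) (hc : c ≠ 0) (hc2 : c ^ 2 = s + s⁻¹)
    (K Ki Jp Jm : A)
    (hKKi : K * Ki = 1) (hKiK : Ki * K = 1)
    (hp : K * Jp * Ki = s • Jp) (hm : K * Jm * Ki = s⁻¹ • Jm)
    (hcomm : Jp * Jm - Jm * Jp = (s - s⁻¹)⁻¹ • (K ^ 2 - Ki ^ 2))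
    -- the vector operator t
    (t1 t0 tm1 : A)
    (ht1 : t1 = K * Jp)
    (ht0 : t0 = -(c⁻¹ • (s⁻¹ • (Jp * Jm) - s • (Jm * Jp))))
    (htm1 : tm1 = -(K * Jm))
    -- the operator t^op
    (top1 top0 topm1 : A)
    (htop1 : top1 = Jp * Ki)
    (htop0 : top0 = c⁻¹ • (s • (Jp * Jm) - s⁻¹ • (Jm * Jp)))
    (htopm1 : topm1 = -(Jm * Ki))
    -- the components of ⁽²⁾t
    (t21 t20 t2m1 : A ⊗[F] A)
    (ht21 : t21 = (K ^ 2) ⊗ₜ[F] (K * Jp))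
    (ht20 : t20 = -(c⁻¹ • ((1 : A) ⊗ₜ[F] (s⁻¹ • (Jp * Jm) - s • (Jm * Jp))
        - ((s - s⁻¹) * (s + s⁻¹)) • ((K * Jm) ⊗ₜ[F] (K * Jp)))))
    (ht2m1 : t2m1 = -((Ki ^ 2) ⊗ₜ[F] (K * Jm))
        - (s⁻¹ * (s - s⁻¹)) • ((Ki * Jm) ⊗ₜ[F] (s⁻¹ • (Jp * Jm) - s • (Jm * Jp)))
        + (s⁻¹ * (s - s⁻¹) ^ 2) • ((Jm ^ 2) ⊗ₜ[F] (K * Jp))) :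
    -- Σ_{m = −1,0,1} (−1)^{1−m} s^m ⁽¹⁾t_m ⁽²⁾t_{−m} = s² Σ_A t^op_{−A} ⊗ t_A
    s • ((t1 ⊗ₜ[F] (1 : A)) * t2m1)
      - (t0 ⊗ₜ[F] (1 : A)) * t20
      + s⁻¹ • ((tm1 ⊗ₜ[F] (1 : A)) * t21)
    = (s ^ 2) • (top1 ⊗ₜ[F] tm1 + top0 ⊗ₜ[F] t0 + topm1 ⊗ₜ[F] t1) :=
  quantum_scalar_product_factorizes_general s c hs hs' hc hc2 K Ki Jp Jm hKiK hp hm hcomm t1 t0 tm1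
    ht1 ht0 htm1 top1 top0 topm1 htop1 htop0 htopm1 t21 t20 t2m1 ht21 ht20 ht2m1
end

section
/- Fix a real number q > 0 with q ≠ 1 and a half-integer j ≥ 0. For A = −1, 0, 1, define the dualized operator t†_A on the spin-j representation entrywise by ⟨e_m, t†_A e_n⟩ = (−1)^{(j+m)+(j+n)} q^{(m−n)/2} ⟨e_{−n}, t_A e_{−m}⟩ (where ⟨e_m, X e_n⟩ denotes the (m,n) matrix entry of X in the basis (e_m)). Then t†_A = (−1)^A q^{A/2} t^op_A as operators on ℝ^{2j+1}. -/
/-! STATEMENT 14: entrywise dualization of the vector operator t gives (−1)^A q^{A/2} t^op_A. -/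

noncomputable section

/-- The q-number [x] = (q^{x/2} − q^{−x/2})/(q^{1/2} − q^{−1/2}). -/
def qnum (q x : ℝ) : ℝ :=
  (q ^ (x / 2) - q ^ (-x / 2)) / (q ^ ((1 : ℝ) / 2) - q ^ (-(1 : ℝ) / 2))

/-- The magnetic number m = i − j attached to the basis index i, where j = n/2. -/
def mval (n : ℕ) (i : Fin (n + 1)) : ℝ := ((i : ℕ) : ℝ) - (n : ℝ) / 2

/-- The operator K of the spin-(n/2) representation. -/
def Kmat (q : ℝ) (n : ℕ) : Matrix (Fin (n + 1)) (Fin (n + 1)) ℝ :=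
  Matrix.diagonal fun i => q ^ (mval n i / 2)

/-- The operator K⁻¹ of the spin-(n/2) representation. -/
def Kinvmat (q : ℝ) (n : ℕ) : Matrix (Fin (n + 1)) (Fin (n + 1)) ℝ :=
  Matrix.diagonal fun i => q ^ (-(mval n i) / 2)

/-- The raising operator J₊ of the spin-(n/2) representation:
J₊ e_m = √([j−m][j+m+1]) e_{m+1}. -/
def Jpmat (q : ℝ) (n : ℕ) : Matrix (Fin (n + 1)) (Fin (n + 1)) ℝ :=
  Matrix.of fun i i' =>
    if (i : ℕ) = (i' : ℕ) + 1 then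
      Real.sqrt (qnum q ((n : ℝ) - ((i' : ℕ) : ℝ)) * qnum q (((i' : ℕ) : ℝ) + 1))
    else 0

/-- The lowering operator J₋ of the spin-(n/2) representation:
J₋ e_m = √([j+m][j−m+1]) e_{m−1}. -/
def Jmmat (q : ℝ) (n : ℕ) : Matrix (Fin (n + 1)) (Fin (n + 1)) ℝ :=
  Matrix.of fun i i' =>
    if (i : ℕ) + 1 = (i' : ℕ) then
      Real.sqrt (qnum q (((i' : ℕ) : ℝ)) * qnum q ((n : ℝ) - ((i' : ℕ) : ℝ) + 1))
    else 0

/-- The component t₁ = K J₊ of the vector operator t. -/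
def tOne (q : ℝ) (n : ℕ) : Matrix (Fin (n + 1)) (Fin (n + 1)) ℝ :=
  Kmat q n * Jpmat q n

/-- The component t₀ = −(q^{−1/2} J₊J₋ − q^{1/2} J₋J₊)/√[2] of the vector operator t. -/
def tZero (q : ℝ) (n : ℕ) : Matrix (Fin (n + 1)) (Fin (n + 1)) ℝ :=
  -((Real.sqrt (qnum q 2))⁻¹ •
    (q ^ (-(1 : ℝ) / 2) • (Jpmat q n * Jmmat q n) - q ^ ((1 : ℝ) / 2) • (Jmmat q n * Jpmat q n)))

/-- The component t₋₁ = −K J₋ of the vector operator t. -/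
def tNegOne (q : ℝ) (n : ℕ) : Matrix (Fin (n + 1)) (Fin (n + 1)) ℝ :=
  -(Kmat q n * Jmmat q n)

/-- The component t^op₁ = J₊ K⁻¹ of the operator t^op. -/
def topOne (q : ℝ) (n : ℕ) : Matrix (Fin (n + 1)) (Fin (n + 1)) ℝ :=
  Jpmat q n * Kinvmat q n

/-- The component t^op₀ = (q^{1/2} J₊J₋ − q^{−1/2} J₋J₊)/√[2] of the operator t^op. -/
def topZero (q : ℝ) (n : ℕ) : Matrix (Fin (n + 1)) (Fin (n + 1)) ℝ :=
  (Real.sqrt (qnum q 2))⁻¹ •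
    (q ^ ((1 : ℝ) / 2) • (Jpmat q n * Jmmat q n) - q ^ (-(1 : ℝ) / 2) • (Jmmat q n * Jpmat q n))

/-- The component t^op₋₁ = −J₋ K⁻¹ of the operator t^op. -/
def topNegOne (q : ℝ) (n : ℕ) : Matrix (Fin (n + 1)) (Fin (n + 1)) ℝ :=
  -(Jmmat q n * Kinvmat q n)

/-- The index flip i ↦ n − i, exchanging e_m and e_{−m}. -/
def flipIdx (n : ℕ) (i : Fin (n + 1)) : Fin (n + 1) := ⟨n - (i : ℕ), by omega⟩

/-- Entrywise dualization:
⟨e_m, X† e_n⟩ = (−1)^{(j+m)+(j+n)} q^{(m−n)/2} ⟨e_{−n}, X e_{−m}⟩. -/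
def dualize (q : ℝ) (n : ℕ) (X : Matrix (Fin (n + 1)) (Fin (n + 1)) ℝ) :
    Matrix (Fin (n + 1)) (Fin (n + 1)) ℝ :=
  Matrix.of fun i i' =>
    (-1 : ℝ) ^ ((i : ℕ) + (i' : ℕ)) * q ^ ((mval n i - mval n i') / 2)
      * X (flipIdx n i') (flipIdx n i)

lemma ladder_sum (n : ℕ) (f : ℕ → ℝ) (g : ℝ) (i i' : Fin (n + 1)) :
    (∑ k : Fin (n + 1), (if (i : ℕ) = (k : ℕ) + 1 then f (k : ℕ) else 0) *
      (if (k : ℕ) + 1 = (i' : ℕ) then g else 0)) =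
    if (i : ℕ) = (i' : ℕ) ∧ 1 ≤ (i : ℕ) then f ((i : ℕ) - 1) * g else 0 := by
  by_cases h : (i : ℕ) = (i' : ℕ) ∧ 1 ≤ (i : ℕ)
  · obtain ⟨h1, h2⟩ := h
    rw [if_pos ⟨h1, h2⟩]
    have hk : ((i : ℕ) - 1) < n + 1 := by omega
    rw [Finset.sum_eq_single (⟨(i : ℕ) - 1, hk⟩ : Fin (n + 1))]
    · rw [if_pos (by simp only [Fin.val_mk]; omega), if_pos (by simp only [Fin.val_mk]; omega)]
    · intro k _ hk'
      have hne : (k : ℕ) ≠ (i : ℕ) - 1 := by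
        intro hc
        exact hk' (Fin.ext (by simp only [Fin.val_mk]; omega))
      rw [if_neg (by omega)]
      ring
    · intro hmem; exact absurd (Finset.mem_univ _) hmem
  · rw [if_neg h]
    apply Finset.sum_eq_zero
    intro k _
    have hne : (i : ℕ) ≠ (k : ℕ) + 1 ∨ (k : ℕ) + 1 ≠ (i' : ℕ) := by
      by_contra hc
      push_neg at hc
      exact h ⟨by omega, by omega⟩
    rcases hne with h1 | h1
    · rw [if_neg h1]; ring
    · rw [if_neg h1]; ring

lemma ladder_sum' (n : ℕ) (f : ℕ → ℝ) (g : ℝ) (i i' : Fin (n + 1)) :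
    (∑ k : Fin (n + 1), (if (i : ℕ) + 1 = (k : ℕ) then f (k : ℕ) else 0) *
      (if (k : ℕ) = (i' : ℕ) + 1 then g else 0)) =
    if (i : ℕ) = (i' : ℕ) ∧ (i : ℕ) + 1 ≤ n then f ((i : ℕ) + 1) * g else 0 := by
  by_cases h : (i : ℕ) = (i' : ℕ) ∧ (i : ℕ) + 1 ≤ n
  · obtain ⟨h1, h2⟩ := h
    rw [if_pos ⟨h1, h2⟩]
    have hk : ((i : ℕ) + 1) < n + 1 := by omega
    rw [Finset.sum_eq_single (⟨(i : ℕ) + 1, hk⟩ : Fin (n + 1))]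
    · rw [if_pos (by simp only [Fin.val_mk]), if_pos (by simp only [Fin.val_mk]; omega)]
    · intro k _ hk'
      have hne : (k : ℕ) ≠ (i : ℕ) + 1 := by
        intro hc
        exact hk' (Fin.ext (by simp only [Fin.val_mk]; omega))
      rw [if_neg (by omega)]
      ring
    · intro hmem; exact absurd (Finset.mem_univ _) hmem
  · rw [if_neg h]
    apply Finset.sum_eq_zero
    intro k _
    have hne : (i : ℕ) + 1 ≠ (k : ℕ) ∨ (k : ℕ) ≠ (i' : ℕ) + 1 := by
      by_contra hc
      push_neg at hc
      exact h ⟨by omega, by omega⟩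
    rcases hne with h1 | h1
    · rw [if_neg h1]; ring
    · rw [if_neg h1]; ring

lemma qnum_zero (q : ℝ) : qnum q 0 = 0 := by
  simp [qnum]

lemma JpJm_apply (q : ℝ) (n : ℕ) (i i' : Fin (n + 1)) :
    (Jpmat q n * Jmmat q n) i i' =
    if (i : ℕ) = (i' : ℕ) then
      Real.sqrt (qnum q ((n : ℝ) - ((i : ℕ) : ℝ) + 1) * qnum q ((i : ℕ) : ℝ)) *
        Real.sqrt (qnum q (((i' : ℕ) : ℝ)) * qnum q ((n : ℝ) - ((i' : ℕ) : ℝ) + 1))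
    else 0 := by
  rw [Matrix.mul_apply]
  simp only [Jpmat, Jmmat, Matrix.of_apply]
  rw [ladder_sum n (fun k => Real.sqrt (qnum q ((n : ℝ) - (k : ℝ)) * qnum q ((k : ℝ) + 1)))
    (Real.sqrt (qnum q (((i' : ℕ) : ℝ)) * qnum q ((n : ℝ) - ((i' : ℕ) : ℝ) + 1))) i i']
  by_cases h1 : (i : ℕ) = (i' : ℕ)
  · by_cases h2 : 1 ≤ (i : ℕ)
    · rw [if_pos ⟨h1, h2⟩, if_pos h1]
      have hc : (((i : ℕ) - 1 : ℕ) : ℝ) = ((i : ℕ) : ℝ) - 1 := by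
        push_cast [h2]; ring
      rw [hc]
      ring_nf
    · rw [if_neg (by tauto), if_pos h1]
      have h0 : (i : ℕ) = 0 := by omega
      rw [h0]
      simp [qnum_zero]
  · rw [if_neg (by tauto), if_neg h1]

lemma JmJp_apply (q : ℝ) (n : ℕ) (i i' : Fin (n + 1)) :
    (Jmmat q n * Jpmat q n) i i' =
    if (i : ℕ) = (i' : ℕ) then
      Real.sqrt (qnum q (((i : ℕ) : ℝ) + 1) * qnum q ((n : ℝ) - ((i : ℕ) : ℝ))) *
        Real.sqrt (qnum q ((n : ℝ) - ((i' : ℕ) : ℝ)) * qnum q (((i' : ℕ) : ℝ) + 1))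
    else 0 := by
  rw [Matrix.mul_apply]
  simp only [Jpmat, Jmmat, Matrix.of_apply]
  rw [ladder_sum' n (fun k => Real.sqrt (qnum q ((k : ℝ)) * qnum q ((n : ℝ) - (k : ℝ) + 1)))
    (Real.sqrt (qnum q ((n : ℝ) - ((i' : ℕ) : ℝ)) * qnum q (((i' : ℕ) : ℝ) + 1))) i i']
  by_cases h1 : (i : ℕ) = (i' : ℕ)
  · by_cases h2 : (i : ℕ) + 1 ≤ n
    · rw [if_pos ⟨h1, h2⟩, if_pos h1]
      have hc : (((i : ℕ) + 1 : ℕ) : ℝ) = ((i : ℕ) : ℝ) + 1 := by push_cast; ring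
      rw [hc]
      ring_nf
    · rw [if_neg (by tauto), if_pos h1]
      have h0 : (i : ℕ) = n := by omega
      have : (n : ℝ) - ((i : ℕ) : ℝ) = 0 := by rw [h0]; ring
      rw [this]
      simp [qnum_zero]
  · rw [if_neg (by tauto), if_neg h1]

lemma flip_val (n : ℕ) (i : Fin (n + 1)) :
    (((flipIdx n i : Fin (n + 1)) : ℕ) : ℝ) = (n : ℝ) - ((i : ℕ) : ℝ) := by
  have hi : (i : ℕ) ≤ n := by omega
  simp only [flipIdx]
  push_cast [hi]
  ring

lemma mval_flip (n : ℕ) (i : Fin (n + 1)) : mval n (flipIdx n i) = -mval n i := by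
  simp only [mval]
  rw [flip_val]
  ring

theorem dual_of_t_is_top (q : ℝ) (hq : 0 < q) (hq1 : q ≠ 1) (n : ℕ) :
    dualize q n (tOne q n) = (-(q ^ ((1 : ℝ) / 2))) • topOne q n ∧
    dualize q n (tZero q n) = topZero q n ∧
    dualize q n (tNegOne q n) = (-(q ^ (-(1 : ℝ) / 2))) • topNegOne q n := by
  refine ⟨?_, ?_, ?_⟩
  · ext i i'
    simp only [dualize, tOne, topOne, Kmat, Kinvmat, Matrix.of_apply, Matrix.smul_apply,
      smul_eq_mul, Matrix.diagonal_mul, Matrix.mul_diagonal, Jpmat, mval_flip, mval]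
    by_cases h : (i : ℕ) = (i' : ℕ) + 1
    · have h2 : ((flipIdx n i' : Fin (n+1)) : ℕ) = ((flipIdx n i : Fin (n+1)) : ℕ) + 1 := by
        simp only [flipIdx]; omega
      rw [if_pos h, if_pos h2, flip_val, flip_val]
      have hir : ((i : ℕ) : ℝ) = ((i' : ℕ) : ℝ) + 1 := by
        exact_mod_cast congrArg (Nat.cast : ℕ → ℝ) h
      rw [hir]
      have hs : ((-1 : ℝ)) ^ ((i : ℕ) + (i' : ℕ)) = -1 := Odd.neg_one_pow ⟨(i' : ℕ), by omega⟩
      rw [hs]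
      ring_nf
    · have h2 : ¬ ((flipIdx n i' : Fin (n+1)) : ℕ) = ((flipIdx n i : Fin (n+1)) : ℕ) + 1 := by
        simp only [flipIdx]; omega
      rw [if_neg h, if_neg h2]
      ring
  · ext i i'
    simp only [dualize, tZero, topZero, Matrix.of_apply, Matrix.smul_apply, Matrix.neg_apply,
      Matrix.sub_apply, smul_eq_mul, JpJm_apply, JmJp_apply, mval]
    by_cases h : (i : ℕ) = (i' : ℕ)
    · have h2 : ((flipIdx n i' : Fin (n+1)) : ℕ) = ((flipIdx n i : Fin (n+1)) : ℕ) := by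
        simp only [flipIdx]; omega
      rw [if_pos h, if_pos h, if_pos h2, if_pos h2, flip_val, flip_val]
      have hir : ((i : ℕ) : ℝ) = ((i' : ℕ) : ℝ) := by
        exact_mod_cast congrArg (Nat.cast : ℕ → ℝ) h
      rw [hir]
      have hs : ((-1 : ℝ)) ^ ((i : ℕ) + (i' : ℕ)) = 1 :=
        Even.neg_one_pow (by rw [h]; exact ⟨(i' : ℕ), by omega⟩)
      rw [hs]
      ring_nf
      simp [Real.rpow_zero]
    · have h2 : ¬ ((flipIdx n i' : Fin (n+1)) : ℕ) = ((flipIdx n i : Fin (n+1)) : ℕ) := by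
        simp only [flipIdx]; omega
      rw [if_neg h, if_neg h, if_neg h2, if_neg h2]
      ring
  · ext i i'
    simp only [dualize, tNegOne, topNegOne, Kmat, Kinvmat, Matrix.of_apply, Matrix.smul_apply,
      Matrix.neg_apply, smul_eq_mul, Matrix.diagonal_mul, Matrix.mul_diagonal, Jmmat,
      mval_flip, mval]
    by_cases h : (i : ℕ) + 1 = (i' : ℕ)
    · have h2 : ((flipIdx n i' : Fin (n+1)) : ℕ) + 1 = ((flipIdx n i : Fin (n+1)) : ℕ) := by
        simp only [flipIdx]; omega
      rw [if_pos h, if_pos h2, flip_val, flip_val]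
      have hir : ((i' : ℕ) : ℝ) = ((i : ℕ) : ℝ) + 1 := by
        exact_mod_cast congrArg (Nat.cast : ℕ → ℝ) h.symm
      rw [hir]
      have hs : ((-1 : ℝ)) ^ ((i : ℕ) + (i' : ℕ)) = -1 := Odd.neg_one_pow ⟨(i : ℕ), by omega⟩
      rw [hs]
      ring_nf
    · have h2 : ¬ ((flipIdx n i' : Fin (n+1)) : ℕ) + 1 = ((flipIdx n i : Fin (n+1)) : ℕ) := by
        simp only [flipIdx]; omega
      rw [if_neg h, if_neg h2]
      ring

end
end
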